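/- Fix 0 < ε < 1 and let α be an m×n real matrix such that ‖αq + p‖ > ε‖q‖^{−n/m} for all (p,q) ∈ ℤ^m × (ℤ^n \ {0}). Then for all Q ≥ 1 and all β ∈ ℝ^m, there is at most one pair (p,q) ∈ ℤ^m × ℤ^n satisfying ‖αq + p + β‖ ≤ (1/2)·ε·Q^{−n/m} and ‖q‖ ≤ (1/2)Q. -/

import Mathlib

/-!
The two residuals `α qᵢ + pᵢ + β` differ by the residual `α q + p` of the integer vector
`(p, q) = (p₁ - p₂, q₁ - q₂)`, so `‖α q + p‖ ≤ ε Q^(-n/m)` and `‖q‖ ≤ Q`. Since the exponent is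
nonpositive and a nonzero integer vector has norm at least `1`, the badly-approximable bound
`‖α q + p‖ > ε ‖q‖^(-n/m) ≥ ε Q^(-n/m)` forces `q = 0`. Then `‖p‖ ≤ ε Q^(-n/m) ≤ ε < 1`, so `p = 0`.
-/

/-- The Euclidean norm of a vector in `Fin k → ℝ`. -/
noncomputable def euclNorm {k : ℕ} (v : Fin k → ℝ) : ℝ :=
  Real.sqrt (∑ i, (v i) ^ 2)

lemma euclNorm_eq_norm_toLp {k : ℕ} (v : Fin k → ℝ) : euclNorm v = ‖WithLp.toLp 2 v‖ := by
  simp [EuclideanSpace.norm_eq, euclNorm, sq_abs]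

lemma euclNorm_sub_le_of_le_half {k : ℕ} {a b : Fin k → ℝ} {r : ℝ}
    (ha : euclNorm a ≤ 1 / 2 * r) (hb : euclNorm b ≤ 1 / 2 * r) : euclNorm (a - b) ≤ r := by
  rw [euclNorm_eq_norm_toLp] at *
  calc ‖WithLp.toLp 2 (a - b)‖ = ‖WithLp.toLp 2 a - WithLp.toLp 2 b‖ := rfl
    _ ≤ ‖WithLp.toLp 2 a‖ + ‖WithLp.toLp 2 b‖ := norm_sub_le _ _
    _ ≤ r := by linarith

lemma one_le_euclNorm_intCast {k : ℕ} {q : Fin k → ℤ} (hq : q ≠ 0) :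
    1 ≤ euclNorm fun j => (q j : ℝ) := by
  obtain ⟨j, hj⟩ := Function.ne_iff.mp hq
  calc (1 : ℝ) ≤ |(q j : ℝ)| := by exact_mod_cast Int.one_le_abs hj
    _ = ‖WithLp.toLp 2 (fun j => (q j : ℝ)) j‖ := rfl
    _ ≤ euclNorm fun j => (q j : ℝ) := by
      rw [euclNorm_eq_norm_toLp]; exact PiLp.norm_apply_le _ j

lemma eq_zero_of_euclNorm_intCast_lt_one {k : ℕ} {q : Fin k → ℤ}
    (hq : euclNorm (fun j => (q j : ℝ)) < 1) : q = 0 := by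
  by_contra h
  exact (one_le_euclNorm_intCast h).not_gt hq

lemma intCast_sub_fun {k : ℕ} (a b : Fin k → ℤ) :
    (fun j => ((a - b) j : ℝ)) = (fun j => (a j : ℝ)) - fun j => (b j : ℝ) := by
  ext; simp

lemma eq_zero_of_euclNorm_mulVec_add_le {m n : ℕ} {α : Matrix (Fin m) (Fin n) ℝ}
    {ε e Q : ℝ} (hε : 0 ≤ ε) (he : e ≤ 0)
    (hbad : ∀ (p : Fin m → ℤ) (q : Fin n → ℤ), q ≠ 0 →
      ε * (euclNorm fun j => (q j : ℝ)) ^ e <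
        euclNorm (α.mulVec (fun j => (q j : ℝ)) + (fun i => (p i : ℝ))))
    {p : Fin m → ℤ} {q : Fin n → ℤ} (hqQ : euclNorm (fun j => (q j : ℝ)) ≤ Q)
    (hpq : euclNorm (α.mulVec (fun j => (q j : ℝ)) + (fun i => (p i : ℝ))) ≤ ε * Q ^ e) :
    q = 0 := by
  by_contra hq
  have hQe : Q ^ e ≤ (euclNorm fun j => (q j : ℝ)) ^ e :=
    Real.rpow_le_rpow_of_nonpos (zero_lt_one.trans_le (one_le_euclNorm_intCast hq)) hqQ he
  exact (hpq.trans (mul_le_mul_of_nonneg_left hQe hε)).not_gt (hbad p q hq)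

theorem stmt_13_general (m n : ℕ) (α : Matrix (Fin m) (Fin n) ℝ)
    (ε : ℝ) (hε0 : 0 < ε) (hε1 : ε < 1)
    (hbad : ∀ (p : Fin m → ℤ) (q : Fin n → ℤ), q ≠ 0 →
      ε * (euclNorm fun j => (q j : ℝ)) ^ (-(n : ℝ) / (m : ℝ)) <
        euclNorm (α.mulVec (fun j => (q j : ℝ)) + (fun i => (p i : ℝ)))) :
    ∀ Q : ℝ, 1 ≤ Q → ∀ β : Fin m → ℝ,
      ∀ (p₁ : Fin m → ℤ) (q₁ : Fin n → ℤ) (p₂ : Fin m → ℤ) (q₂ : Fin n → ℤ),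
        euclNorm (α.mulVec (fun j => (q₁ j : ℝ)) + (fun i => (p₁ i : ℝ)) + β) ≤
          (1 / 2) * ε * Q ^ (-(n : ℝ) / (m : ℝ)) →
        euclNorm (fun j => (q₁ j : ℝ)) ≤ (1 / 2) * Q →
        euclNorm (α.mulVec (fun j => (q₂ j : ℝ)) + (fun i => (p₂ i : ℝ)) + β) ≤
          (1 / 2) * ε * Q ^ (-(n : ℝ) / (m : ℝ)) →
        euclNorm (fun j => (q₂ j : ℝ)) ≤ (1 / 2) * Q →
        p₁ = p₂ ∧ q₁ = q₂ := by
  intro Q hQ β p₁ q₁ p₂ q₂ h₁ hq₁ h₂ hq₂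
  have he : -(n : ℝ) / m ≤ 0 := div_nonpos_of_nonpos_of_nonneg (by simp) (by positivity)
  have hdiff : α.mulVec (fun j => ((q₁ - q₂) j : ℝ)) + (fun i => ((p₁ - p₂) i : ℝ)) =
      (α.mulVec (fun j => (q₁ j : ℝ)) + (fun i => (p₁ i : ℝ)) + β) -
        (α.mulVec (fun j => (q₂ j : ℝ)) + (fun i => (p₂ i : ℝ)) + β) := by
    rw [intCast_sub_fun, intCast_sub_fun, Matrix.mulVec_sub]
    abel
  have hres : euclNorm (α.mulVec (fun j => ((q₁ - q₂) j : ℝ)) + fun i => ((p₁ - p₂) i : ℝ)) ≤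
      ε * Q ^ (-(n : ℝ) / m) := by
    rw [hdiff]
    exact euclNorm_sub_le_of_le_half (by linarith) (by linarith)
  have hq : q₁ - q₂ = 0 := eq_zero_of_euclNorm_mulVec_add_le hε0.le he hbad
    (by rw [intCast_sub_fun]; exact euclNorm_sub_le_of_le_half hq₁ hq₂) hres
  have hp : p₁ - p₂ = 0 := by
    refine eq_zero_of_euclNorm_intCast_lt_one (lt_of_le_of_lt ?_ hε1)
    rw [hq] at hres
    simpa [← Pi.zero_def] using hres.trans (mul_le_of_le_one_right hε0.le
      (Real.rpow_le_one_of_one_le_of_nonpos hQ he))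
  exact ⟨sub_eq_zero.mp hp, sub_eq_zero.mp hq⟩

theorem stmt_13 (m n : ℕ) (hm : 0 < m) (hn : 0 < n) (α : Matrix (Fin m) (Fin n) ℝ)
    (ε : ℝ) (hε0 : 0 < ε) (hε1 : ε < 1)
    (hbad : ∀ (p : Fin m → ℤ) (q : Fin n → ℤ), q ≠ 0 →
      ε * (euclNorm fun j => (q j : ℝ)) ^ (-(n : ℝ) / (m : ℝ)) <
        euclNorm (α.mulVec (fun j => (q j : ℝ)) + (fun i => (p i : ℝ)))) :
    ∀ Q : ℝ, 1 ≤ Q → ∀ β : Fin m → ℝ,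
      ∀ (p₁ : Fin m → ℤ) (q₁ : Fin n → ℤ) (p₂ : Fin m → ℤ) (q₂ : Fin n → ℤ),
        euclNorm (α.mulVec (fun j => (q₁ j : ℝ)) + (fun i => (p₁ i : ℝ)) + β) ≤
          (1 / 2) * ε * Q ^ (-(n : ℝ) / (m : ℝ)) →
        euclNorm (fun j => (q₁ j : ℝ)) ≤ (1 / 2) * Q →
        euclNorm (α.mulVec (fun j => (q₂ j : ℝ)) + (fun i => (p₂ i : ℝ)) + β) ≤
          (1 / 2) * ε * Q ^ (-(n : ℝ) / (m : ℝ)) →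
        euclNorm (fun j => (q₂ j : ℝ)) ≤ (1 / 2) * Q →
        p₁ = p₂ ∧ q₁ = q₂ :=
  stmt_13_general m n α ε hε0 hε1 hbad
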